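/- arXiv:0808.3915 — 2 statements merged into one kernel-verified Lean document; each statement's English description precedes it below -/
import Mathlib

section
/- The Bernstein relation holds for the Demazure–Lusztig operators: for λ = (λ_1, …, λ_n) ∈ ℤ^n set θ_λ = X_1^{λ_1}⋯X_n^{λ_n} (the operator of multiplication by x_1^{−λ_1}⋯x_n^{−λ_n}) and let s_iλ be λ with its i-th and (i+1)-st entries exchanged. Then x_1^{−λ_1}⋯x_n^{−λ_n} − x_1^{−(s_iλ)_1}⋯x_n^{−(s_iλ)_n} is divisible by x_i^{−1}x_{i+1} − 1 in R, and as operators on R: T_i θ_λ = θ_{s_iλ} T_i + (1 − q)·M_{i,λ}, where M_{i,λ} is multiplication by the Laurent polynomial (x_1^{−λ_1}⋯x_n^{−λ_n} − x_1^{−(s_iλ)_1}⋯x_n^{−(s_iλ)_n})/(x_i^{−1}x_{i+1} − 1) (i.e., (θ_λ − θ_{s_iλ})/(θ_{−α_i} − 1) with θ_{−α_i} = X_i X_{i+1}^{−1}). -/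
noncomputable section

/-- The field `ℂ(q)` of rational functions in the indeterminate `q`. -/
abbrev KK : Type := RatFunc ℂ

/-- The ring `R = ℂ(q)[x_1^{±1}, …, x_n^{±1}]` of Laurent polynomials. -/
abbrev RL (n : ℕ) : Type := AddMonoidAlgebra KK (Fin n →₀ ℤ)

/-- The parameter `q`, an indeterminate over `ℂ`. -/
def qK : KK := RatFunc.X

/-- `q` viewed as a constant in the Laurent polynomial ring `R`. -/
def qc (n : ℕ) : RL n := AddMonoidAlgebra.single 0 qK

/-- The monomial `x^μ` for an exponent vector `μ ∈ ℤ^n`. -/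
def xpow (n : ℕ) (μ : Fin n →₀ ℤ) : RL n := AddMonoidAlgebra.single μ 1

/-- The `ℂ(q)`-linear substitution exchanging the variables `x_a` and `x_b`. -/
def sOp {n : ℕ} (a b : Fin n) (f : RL n) : RL n :=
  AddMonoidAlgebra.ofCoeff
    (Finsupp.equivMapDomain (Finsupp.equivCongrLeft (Equiv.swap a b)) f.coeff)

open scoped Classical in
/-- `divBy d a` is a quotient of `a` by `d` when `d ∣ a`, and `0` otherwise. -/
def divBy {n : ℕ} (d a : RL n) : RL n := if h : d ∣ a then h.choose else 0

/-- Exponent vector of `x_b x_a⁻¹`. -/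
def dExp {n : ℕ} (a b : Fin n) : Fin n →₀ ℤ := Finsupp.single b 1 - Finsupp.single a 1

/-- The Demazure–Lusztig operator
`T f = (f − s f)/(x_b x_a⁻¹ − 1) − q·(f − x_b x_a⁻¹·(s f))/(x_b x_a⁻¹ − 1)`
(for `a = i`, `b = i+1` this is `T_i`). -/
def DLop {n : ℕ} (a b : Fin n) (f : RL n) : RL n :=
  divBy (xpow n (dExp a b) - 1)
    ((1 - qc n) * f - (1 - qc n * xpow n (dExp a b)) * sOp a b f)

/-- The operator `X_j`: multiplication by `x_j⁻¹`. -/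
def Xop {n : ℕ} (j : Fin n) (f : RL n) : RL n := xpow n (Finsupp.single j (-1)) * f

end

noncomputable section

/-- The exponent vector `−λ` of the monomial `x^{−λ}`; `θ_λ` is multiplication by it. -/
def thetaExp (n : ℕ) (lam : Fin n → ℤ) : Fin n →₀ ℤ :=
  Finsupp.equivFunOnFinite.symm (fun j => - lam j)

end

/-!
Let `s` be the automorphism of `R` exchanging `x_a` and `x_b`, and `D = x_b x_a⁻¹ - 1`.
On a monomial, `x^μ - x^{sμ} = x^{sμ} ((x_b x_a⁻¹)^k - 1)` with `k = μ_b - μ_a`, so `D` divides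
`f - s f` for every `f`, and the division defining `T` is exact:
`D · T f = (1 - q) f - (1 - q x_b x_a⁻¹) s f`.
Multiplying the Bernstein relation by `D` and using `s (θ f) = (s θ) (s f)`, both sides become
`(1 - q) θ f - (1 - q x_b x_a⁻¹) (s θ) (s f)`; since `R` is a domain, `D` may be cancelled.
-/

noncomputable section

open AddMonoidAlgebra

variable {n : ℕ}

lemma xpow_add (μ ν : Fin n →₀ ℤ) : xpow n (μ + ν) = xpow n μ * xpow n ν := by
  simp [xpow, single_mul_single]

lemma xpow_nsmul (m : ℕ) (δ : Fin n →₀ ℤ) : xpow n (m • δ) = xpow n δ ^ m := by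
  simp [xpow, single_pow]

lemma xpow_sub_one_dvd_xpow_add_nsmul_sub (ν δ : Fin n →₀ ℤ) (m : ℕ) :
    xpow n δ - 1 ∣ xpow n (ν + m • δ) - xpow n ν := by
  rw [xpow_add, xpow_nsmul, ← mul_sub_one]
  exact (sub_one_dvd_pow_sub_one _ _).mul_left _

lemma xpow_dExp_sub_one_ne_zero {a b : Fin n} (hab : a ≠ b) : xpow n (dExp a b) - 1 ≠ 0 := by
  intro h
  have hδ : dExp a b = 0 := by
    rw [sub_eq_zero, xpow, one_def] at h
    simpa using single_inj.mp h
  simpa [dExp, hab] using DFunLike.congr_fun hδ b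

def swapExp (a b : Fin n) : (Fin n →₀ ℤ) ≃+ (Fin n →₀ ℤ) :=
  Finsupp.domCongr (Equiv.swap a b)

lemma swapExp_apply (a b : Fin n) (μ : Fin n →₀ ℤ) (j : Fin n) :
    swapExp a b μ j = μ (Equiv.swap a b j) := by
  simp [swapExp, Finsupp.equivMapDomain_apply]

lemma swapExp_thetaExp (a b : Fin n) (lam : Fin n → ℤ) :
    swapExp a b (thetaExp n lam) = thetaExp n (lam ∘ Equiv.swap a b) := by
  ext j
  simp [swapExp_apply, thetaExp]

lemma eq_swapExp_add_zsmul_dExp {a b : Fin n} (hab : a ≠ b) (μ : Fin n →₀ ℤ) :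
    μ = swapExp a b μ + (μ b - μ a) • dExp a b := by
  ext j
  simp only [Finsupp.add_apply, Finsupp.smul_apply, dExp, Finsupp.sub_apply,
    Finsupp.single_apply, swapExp_apply, smul_eq_mul]
  rcases eq_or_ne j a with rfl | hja
  · simp [Ne.symm hab]
  rcases eq_or_ne j b with rfl | hjb
  · simp [hab]
  · simp [Equiv.swap_apply_of_ne_of_ne hja hjb, Ne.symm hja, Ne.symm hjb]

lemma xpow_dExp_sub_one_dvd_xpow_sub_xpow_swapExp {a b : Fin n} (hab : a ≠ b)
    (μ : Fin n →₀ ℤ) : xpow n (dExp a b) - 1 ∣ xpow n μ - xpow n (swapExp a b μ) := by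
  have hμ := eq_swapExp_add_zsmul_dExp hab μ
  obtain ⟨m, hm | hm⟩ := Int.eq_nat_or_neg (μ b - μ a)
  · rw [hm, natCast_zsmul] at hμ
    simpa [← hμ] using xpow_sub_one_dvd_xpow_add_nsmul_sub (swapExp a b μ) (dExp a b) m
  · rw [hm, neg_zsmul, natCast_zsmul, eq_add_neg_iff_add_eq] at hμ
    rw [dvd_sub_comm, ← hμ]
    exact xpow_sub_one_dvd_xpow_add_nsmul_sub μ (dExp a b) m

def swapAlgEquiv (a b : Fin n) : RL n ≃ₐ[KK] RL n :=
  domCongr KK KK (swapExp a b)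

lemma sOp_eq_swapAlgEquiv (a b : Fin n) : sOp a b = swapAlgEquiv a b := by
  ext f ν
  simp [sOp, swapAlgEquiv, swapExp, Finsupp.equivMapDomain_apply]

lemma swapAlgEquiv_single (a b : Fin n) (μ : Fin n →₀ ℤ) (c : KK) :
    swapAlgEquiv a b (single μ c) = single (swapExp a b μ) c :=
  domCongr_single _ μ c

lemma xpow_dExp_sub_one_dvd_sub_sOp {a b : Fin n} (hab : a ≠ b) (f : RL n) :
    xpow n (dExp a b) - 1 ∣ f - sOp a b f := by
  rw [sOp_eq_swapAlgEquiv]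
  induction f using induction_linear with
  | zero => simp
  | add f g hf hg =>
    rw [map_add, add_sub_add_comm]
    exact dvd_add hf hg
  | single μ c =>
    have hsingle (ν : Fin n →₀ ℤ) : (single ν c : RL n) = c • xpow n ν := by
      rw [xpow, smul_single', mul_one]
    rw [swapAlgEquiv_single, hsingle, hsingle, ← smul_sub, Algebra.smul_def]
    exact (xpow_dExp_sub_one_dvd_xpow_sub_xpow_swapExp hab μ).mul_left _

lemma mul_divBy {d x : RL n} (h : d ∣ x) : d * divBy d x = x := by
  rw [divBy, dif_pos h]
  exact h.choose_spec.symm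

lemma xpow_dExp_sub_one_mul_DLop {a b : Fin n} (hab : a ≠ b) (f : RL n) :
    (xpow n (dExp a b) - 1) * DLop a b f
      = (1 - qc n) * f - (1 - qc n * xpow n (dExp a b)) * sOp a b f := by
  refine mul_divBy ?_
  have hnum : (1 - qc n) * f - (1 - qc n * xpow n (dExp a b)) * sOp a b f
      = (1 - qc n) * (f - sOp a b f) + qc n * sOp a b f * (xpow n (dExp a b) - 1) := by
    ring
  rw [hnum]
  exact dvd_add ((xpow_dExp_sub_one_dvd_sub_sOp hab f).mul_left _) (dvd_mul_left _ _)

theorem bernstein_relation_of_ne {a b : Fin n} (hab : a ≠ b) (lam : Fin n → ℤ) :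
    (xpow n (dExp a b) - 1) ∣
        (xpow n (thetaExp n lam) - xpow n (thetaExp n (lam ∘ Equiv.swap a b)))
    ∧ ∀ f : RL n,
        DLop a b (xpow n (thetaExp n lam) * f)
          = xpow n (thetaExp n (lam ∘ Equiv.swap a b)) * DLop a b f
            + (1 - qc n) *
                (divBy (xpow n (dExp a b) - 1)
                  (xpow n (thetaExp n lam) -
                    xpow n (thetaExp n (lam ∘ Equiv.swap a b))) * f) := by
  have hdvd : xpow n (dExp a b) - 1 ∣
      xpow n (thetaExp n lam) - xpow n (thetaExp n (lam ∘ Equiv.swap a b)) := by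
    rw [← swapExp_thetaExp]
    exact xpow_dExp_sub_one_dvd_xpow_sub_xpow_swapExp hab _
  refine ⟨hdvd, fun f => mul_left_cancel₀ (xpow_dExp_sub_one_ne_zero hab) ?_⟩
  have hs : sOp a b (xpow n (thetaExp n lam) * f)
      = xpow n (thetaExp n (lam ∘ Equiv.swap a b)) * sOp a b f := by
    rw [sOp_eq_swapAlgEquiv, map_mul, xpow, swapAlgEquiv_single, swapExp_thetaExp, ← xpow]
  linear_combination xpow_dExp_sub_one_mul_DLop hab (xpow n (thetaExp n lam) * f)
    - xpow n (thetaExp n (lam ∘ Equiv.swap a b)) * xpow_dExp_sub_one_mul_DLop hab f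
    - (1 - qc n) * f * mul_divBy hdvd
    - (1 - qc n * xpow n (dExp a b)) * hs

end

/-- Statement 11: the Bernstein relation for the Demazure–Lusztig operators.
The difference `x^{−λ} − x^{−s_iλ}` is divisible by `x_i⁻¹x_{i+1} − 1`, and
`T_i θ_λ = θ_{s_iλ} T_i + (1 − q)·M_{i,λ}` where `M_{i,λ}` is multiplication by
`(x^{−λ} − x^{−s_iλ})/(x_i⁻¹x_{i+1} − 1)`. -/
theorem bernstein_relation (n : ℕ) (i : ℕ) (hi : i + 1 < n) (lam : Fin n → ℤ) :
    (xpow n (dExp (⟨i, by omega⟩ : Fin n) ⟨i + 1, hi⟩) - 1) ∣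
        (xpow n (thetaExp n lam) -
          xpow n (thetaExp n (lam ∘ Equiv.swap (⟨i, by omega⟩ : Fin n) ⟨i + 1, hi⟩)))
    ∧ ∀ f : RL n,
        DLop (⟨i, by omega⟩ : Fin n) ⟨i + 1, hi⟩ (xpow n (thetaExp n lam) * f)
          = xpow n (thetaExp n (lam ∘ Equiv.swap (⟨i, by omega⟩ : Fin n) ⟨i + 1, hi⟩)) *
              DLop (⟨i, by omega⟩ : Fin n) ⟨i + 1, hi⟩ f
            + (1 - qc n) *
                (divBy (xpow n (dExp (⟨i, by omega⟩ : Fin n) ⟨i + 1, hi⟩) - 1)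
                  (xpow n (thetaExp n lam) -
                    xpow n (thetaExp n
                      (lam ∘ Equiv.swap (⟨i, by omega⟩ : Fin n) ⟨i + 1, hi⟩))) * f) := by
  exact bernstein_relation_of_ne (by simp [Fin.ext_iff]) lam
end

section
/- For every aperiodic multisegment ψ and every i ∈ ℤ/eℤ: ẽ_i(f̃_i ψ) = ψ; and if ẽ_i ψ ≠ 0, then f̃_i(ẽ_i ψ) = ψ. -/
/-- A (ℤ/eℤ-valued) multisegment, recorded by multiplicities: `m len j` is the
multiplicity of the segment `(len; j]` of length `len ≥ 1` and tail `j`. -/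
structure Multisegment (e : ℕ) where
  m : ℕ → ZMod e → ℕ
  zero : ∀ j : ZMod e, m 0 j = 0
  finite : ∃ N : ℕ, ∀ len : ℕ, N ≤ len → ∀ j : ZMod e, m len j = 0

namespace Multisegment

variable {e : ℕ}

/-- `S_{l,i}(ψ) = Σ_{k ≥ l} (m_{(k; i-1]}(ψ) − m_{(k; i]}(ψ))`. -/
noncomputable def Sval (ψ : Multisegment e) (i : ZMod e) (len : ℕ) : ℤ :=
  ∑ᶠ k : ℕ, if len ≤ k then ((ψ.m k (i - 1) : ℤ) - (ψ.m k i : ℤ)) else 0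

/-- `min_{l > 0} S_{l,i}(ψ)`. -/
noncomputable def minS (ψ : Multisegment e) (i : ZMod e) : ℤ :=
  sInf {x : ℤ | ∃ len : ℕ, 1 ≤ len ∧ Sval ψ i len = x}

/-- The smallest `l > 0` attaining `min_{l > 0} S_{l,i}(ψ)`. -/
noncomputable def ellF (ψ : Multisegment e) (i : ZMod e) : ℕ :=
  sInf {len : ℕ | 1 ≤ len ∧ Sval ψ i len = minS ψ i}

/-- The largest `l > 0` attaining `min_{l > 0} S_{l,i}(ψ)`. -/
noncomputable def ellE (ψ : Multisegment e) (i : ZMod e) : ℕ :=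
  sSup {len : ℕ | 1 ≤ len ∧ Sval ψ i len = minS ψ i}

/-- The Kashiwara operator `f̃_i` on multisegments: with `ℓ₀ = ellF ψ i`, add `(1; i]`
if `ℓ₀ = 1`, and replace one copy of `(ℓ₀ − 1; i − 1]` by `(ℓ₀; i]` if `ℓ₀ > 1`. -/
noncomputable def ftM (ψ : Multisegment e) (i : ZMod e) : Multisegment e where
  m := fun len j =>
    if len = ellF ψ i ∧ 1 ≤ len ∧ j = i then ψ.m len j + 1
    else if len + 1 = ellF ψ i ∧ 1 ≤ len ∧ j = i - 1 then ψ.m len j - 1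
    else ψ.m len j
  zero := by intro j; simp [ψ.zero j]
  finite := by
    obtain ⟨N, hN⟩ := ψ.finite
    refine ⟨max N (ellF ψ i + 1), fun len hlen j => ?_⟩
    have h1 : N ≤ len := le_trans (le_max_left _ _) hlen
    have h2 : ellF ψ i + 1 ≤ len := le_trans (le_max_right _ _) hlen
    have hne1 : ¬(len = ellF ψ i ∧ 1 ≤ len ∧ j = i) := by rintro ⟨h, -⟩; omega
    have hne2 : ¬(len + 1 = ellF ψ i ∧ 1 ≤ len ∧ j = i - 1) := by rintro ⟨h, -⟩; omega
    simp [hne1, hne2, hN len h1 j]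

/-- The Kashiwara operator `ẽ_i` on multisegments: `none` if `min_{l>0} S_{l,i}(ψ) = 0`;
otherwise, with `ℓ₀ = ellE ψ i`, replace one copy of `(ℓ₀; i]` by `(ℓ₀ − 1; i − 1]`
(removing it when `ℓ₀ = 1`). -/
noncomputable def etM (ψ : Multisegment e) (i : ZMod e) : Option (Multisegment e) :=
  if minS ψ i = 0 then none
  else some
    { m := fun len j =>
        if len = ellE ψ i ∧ 1 ≤ len ∧ j = i then ψ.m len j - 1
        else if len + 1 = ellE ψ i ∧ 1 ≤ len ∧ j = i - 1 then ψ.m len j + 1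
        else ψ.m len j
      zero := by intro j; simp [ψ.zero j]
      finite := by
        obtain ⟨N, hN⟩ := ψ.finite
        refine ⟨max N (ellE ψ i + 1), fun len hlen j => ?_⟩
        have h1 : N ≤ len := le_trans (le_max_left _ _) hlen
        have h2 : ellE ψ i + 1 ≤ len := le_trans (le_max_right _ _) hlen
        have hne1 : ¬(len = ellE ψ i ∧ 1 ≤ len ∧ j = i) := by rintro ⟨h, -⟩; omega
        have hne2 : ¬(len + 1 = ellE ψ i ∧ 1 ≤ len ∧ j = i - 1) := by rintro ⟨h, -⟩; omega
        simp [hne1, hne2, hN len h1 j] }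

/-- Aperiodicity: for every length `l ≥ 1` there is a head `h ∈ ℤ/eℤ` such that the
segment of length `l` and head `h` (i.e. tail `h + l − 1`) does not occur in `ψ`. -/
def Aperiodic (ψ : Multisegment e) : Prop :=
  ∀ len : ℕ, 1 ≤ len → ∃ h : ZMod e, ψ.m len (h + (len : ZMod e) - 1) = 0

lemma exists_bound (ψ : Multisegment e) :
    ∃ N : ℕ, 1 ≤ N ∧ ∀ len : ℕ, N ≤ len → ∀ j : ZMod e, ψ.m len j = 0 := by
  obtain ⟨N, hN⟩ := ψ.finite
  exact ⟨max N 1, le_max_right _ _, fun len h j => hN len (le_trans (le_max_left _ _) h) j⟩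

lemma Sval_eq_sum (ψ : Multisegment e) (i : ZMod e) {N : ℕ}
    (hN : ∀ len : ℕ, N ≤ len → ∀ j : ZMod e, ψ.m len j = 0) (len : ℕ) :
    Sval ψ i len = ∑ k ∈ Finset.Ico len N, ((ψ.m k (i - 1) : ℤ) - (ψ.m k i : ℤ)) := by
  rw [Sval, finsum_eq_sum_of_support_subset _ (s := Finset.Ico len N) ?_]
  · exact Finset.sum_congr rfl fun k hk => if_pos (Finset.mem_Ico.mp hk).1
  · intro k hk
    simp only [Function.mem_support, ne_eq] at hk
    simp only [Finset.coe_Ico, Set.mem_Ico]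
    by_contra hk'
    rcases not_and_or.mp hk' with h | h
    · exact hk (if_neg h)
    · push_neg at h
      exact hk (by rw [hN k h, hN k h]; simp)

lemma Sval_zero (ψ : Multisegment e) (i : ZMod e) {N : ℕ}
    (hN : ∀ len : ℕ, N ≤ len → ∀ j : ZMod e, ψ.m len j = 0) {len : ℕ} (h : N ≤ len) :
    Sval ψ i len = 0 := by
  rw [Sval_eq_sum ψ i hN len, Finset.Ico_eq_empty (by omega), Finset.sum_empty]

lemma Sval_succ (ψ : Multisegment e) (i : ZMod e) (len : ℕ) :
    Sval ψ i len = ((ψ.m len (i - 1) : ℤ) - (ψ.m len i : ℤ)) + Sval ψ i (len + 1) := by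
  obtain ⟨N, hN1, hN⟩ := exists_bound ψ
  have hN' : ∀ l : ℕ, max N (len + 1) ≤ l → ∀ j : ZMod e, ψ.m l j = 0 :=
    fun l h j => hN l (le_trans (le_max_left _ _) h) j
  rw [Sval_eq_sum ψ i hN' len, Sval_eq_sum ψ i hN' (len + 1),
    Finset.sum_eq_sum_Ico_succ_bot (by omega)]

lemma minS_bdd (ψ : Multisegment e) (i : ZMod e) :
    BddBelow {x : ℤ | ∃ len : ℕ, 1 ≤ len ∧ Sval ψ i len = x} := by
  obtain ⟨N, hN1, hN⟩ := exists_bound ψ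
  apply Set.Finite.bddBelow
  apply Set.Finite.subset (Set.finite_range fun l : Fin (N + 1) => Sval ψ i l)
  rintro x ⟨len, hl, rfl⟩
  by_cases h : len ≤ N
  · exact ⟨⟨len, by omega⟩, rfl⟩
  · refine ⟨⟨N, by omega⟩, ?_⟩
    simp only
    rw [Sval_zero ψ i hN (le_refl N), Sval_zero ψ i hN (by omega)]

lemma minS_mem (ψ : Multisegment e) (i : ZMod e) :
    ∃ len : ℕ, 1 ≤ len ∧ Sval ψ i len = minS ψ i :=
  Int.csInf_mem (s := {x : ℤ | ∃ len : ℕ, 1 ≤ len ∧ Sval ψ i len = x})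
    ⟨Sval ψ i 1, 1, le_refl 1, rfl⟩ (minS_bdd ψ i)

lemma minS_le (ψ : Multisegment e) (i : ZMod e) {len : ℕ} (h : 1 ≤ len) :
    minS ψ i ≤ Sval ψ i len :=
  csInf_le (minS_bdd ψ i) ⟨len, h, rfl⟩

lemma minS_nonpos (ψ : Multisegment e) (i : ZMod e) : minS ψ i ≤ 0 := by
  obtain ⟨N, hN1, hN⟩ := exists_bound ψ
  have := minS_le ψ i hN1
  rwa [Sval_zero ψ i hN (le_refl N)] at this

lemma ellF_mem (ψ : Multisegment e) (i : ZMod e) :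
    1 ≤ ellF ψ i ∧ Sval ψ i (ellF ψ i) = minS ψ i := by
  have h := minS_mem ψ i
  exact Nat.sInf_mem (s := {len : ℕ | 1 ≤ len ∧ Sval ψ i len = minS ψ i}) h

lemma ellF_lt (ψ : Multisegment e) (i : ZMod e) {l : ℕ} (h1 : 1 ≤ l) (h2 : l < ellF ψ i) :
    minS ψ i < Sval ψ i l := by
  refine lt_of_le_of_ne (minS_le ψ i h1) fun h => ?_
  have := Nat.sInf_le (s := {len : ℕ | 1 ≤ len ∧ Sval ψ i len = minS ψ i}) ⟨h1, h.symm⟩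
  unfold ellF at h2; omega

lemma ellE_bdd (ψ : Multisegment e) (i : ZMod e) (hm : minS ψ i ≠ 0) :
    BddAbove {len : ℕ | 1 ≤ len ∧ Sval ψ i len = minS ψ i} := by
  obtain ⟨N, hN1, hN⟩ := exists_bound ψ
  refine ⟨N, fun l hl => ?_⟩
  by_contra h
  push_neg at h
  exact hm (hl.2 ▸ (Sval_zero ψ i hN h.le).symm ▸ (Sval_zero ψ i hN h.le))

lemma ellE_mem (ψ : Multisegment e) (i : ZMod e) (hm : minS ψ i ≠ 0) :
    1 ≤ ellE ψ i ∧ Sval ψ i (ellE ψ i) = minS ψ i :=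
  Nat.sSup_mem (minS_mem ψ i) (ellE_bdd ψ i hm)

lemma ellE_gt (ψ : Multisegment e) (i : ZMod e) (hm : minS ψ i ≠ 0) {l : ℕ}
    (h2 : ellE ψ i < l) : minS ψ i < Sval ψ i l := by
  have h1 : 1 ≤ l := le_trans (ellE_mem ψ i hm).1 h2.le |>.trans (le_refl l)
  refine lt_of_le_of_ne (minS_le ψ i (by omega)) fun h => ?_
  have := le_csSup (ellE_bdd ψ i hm) (⟨by omega, h.symm⟩ :
    l ∈ {len : ℕ | 1 ≤ len ∧ Sval ψ i len = minS ψ i})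
  unfold ellE at h2; omega

lemma Sval_shift {ψ ψ' : Multisegment e} {i : ZMod e} {ℓ₀ : ℕ} (hℓ : 1 ≤ ℓ₀) (ε : ℤ)
    (h : ∀ k : ℕ, 1 ≤ k →
      ((ψ'.m k (i - 1) : ℤ) - (ψ'.m k i : ℤ)) =
        ((ψ.m k (i - 1) : ℤ) - (ψ.m k i : ℤ)) + (if k = ℓ₀ then ε else 0)
          + (if k + 1 = ℓ₀ then ε else 0)) :
    ∀ len : ℕ, 1 ≤ len → Sval ψ' i len =
      Sval ψ i len + (if len ≤ ℓ₀ then ε else 0) + (if len + 1 ≤ ℓ₀ then ε else 0) := by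
  obtain ⟨N, hN1, hN⟩ := exists_bound ψ
  obtain ⟨N', hN1', hN'⟩ := exists_bound ψ'
  intro len hlen
  set M := max (max N N') (ℓ₀ + 1) with hM
  have hMψ : ∀ l, M ≤ l → ∀ j, ψ.m l j = 0 := fun l hl j => hN l (by omega) j
  have hMψ' : ∀ l, M ≤ l → ∀ j, ψ'.m l j = 0 := fun l hl j => hN' l (by omega) j
  rw [Sval_eq_sum ψ' i hMψ' len, Sval_eq_sum ψ i hMψ len]
  rw [Finset.sum_congr rfl (fun k hk => h k (le_trans hlen (Finset.mem_Ico.mp hk).1))]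
  rw [Finset.sum_add_distrib, Finset.sum_add_distrib]
  congr 1
  · congr 1
    rw [Finset.sum_ite_eq' (Finset.Ico len M) ℓ₀ (fun _ => ε)]
    have hlt : ℓ₀ < M := by omega
    by_cases hc : len ≤ ℓ₀
    · rw [if_pos (Finset.mem_Ico.mpr ⟨hc, hlt⟩), if_pos hc]
    · rw [if_neg (fun hmem => hc (Finset.mem_Ico.mp hmem).1), if_neg hc]
  · have hcongr : ∀ k ∈ Finset.Ico len M,
        (if k + 1 = ℓ₀ then ε else 0) = (if k = ℓ₀ - 1 ∧ 2 ≤ ℓ₀ then ε else 0) := by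
      intro k hk
      have hk1 : 1 ≤ k := le_trans hlen (Finset.mem_Ico.mp hk).1
      by_cases hc : k + 1 = ℓ₀
      · rw [if_pos hc, if_pos (by omega)]
      · rw [if_neg hc, if_neg (by omega)]
    rw [Finset.sum_congr rfl hcongr]
    by_cases h2 : 2 ≤ ℓ₀
    · have : ∀ k ∈ Finset.Ico len M,
          (if k = ℓ₀ - 1 ∧ 2 ≤ ℓ₀ then ε else 0) = (if k = ℓ₀ - 1 then ε else 0) := by
        intro k _; simp [h2]
      rw [Finset.sum_congr rfl this, Finset.sum_ite_eq' (Finset.Ico len M) (ℓ₀ - 1) (fun _ => ε)]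
      by_cases hc : len + 1 ≤ ℓ₀
      · rw [if_pos (Finset.mem_Ico.mpr ⟨by omega, by omega⟩), if_pos hc]
      · rw [if_neg (fun hmem => by have := (Finset.mem_Ico.mp hmem).1; omega), if_neg hc]
    · have : ∀ k ∈ Finset.Ico len M,
          (if k = ℓ₀ - 1 ∧ 2 ≤ ℓ₀ then ε else 0) = 0 := by
        intro k _; rw [if_neg (by omega)]
      rw [Finset.sum_congr rfl this, Finset.sum_const_zero, if_neg (by omega)]

lemma ext' {ψ φ : Multisegment e} (h : ψ.m = φ.m) : ψ = φ := by
  cases ψ; cases φ; congr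

lemma sub_one_ne (he : 2 ≤ e) (i : ZMod e) : i - 1 ≠ i := fun h => by
  haveI : Fact (1 < e) := ⟨by omega⟩
  exact one_ne_zero (sub_eq_self.mp h)

theorem dir1 (he : 2 ≤ e) (ψ : Multisegment e) (i : ZMod e) :
    etM (ftM ψ i) i = some ψ := by
  have hne : i - 1 ≠ i := sub_one_ne he i
  have hne' : i ≠ i - 1 := fun hc => hne hc.symm
  have hF1 := (ellF_mem ψ i).1
  have hF2 := (ellF_mem ψ i).2
  -- key positivity fact
  have key : 2 ≤ ellF ψ i → 1 ≤ ψ.m (ellF ψ i - 1) (i - 1) := by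
    intro hl2
    have h1 := ellF_lt ψ i (l := ellF ψ i - 1) (by omega) (by omega)
    have h2 := Sval_succ ψ i (ellF ψ i - 1)
    rw [show ellF ψ i - 1 + 1 = ellF ψ i by omega, hF2] at h2
    omega
  -- pointwise difference
  have hd : ∀ k : ℕ, 1 ≤ k →
      (((ftM ψ i).m k (i - 1) : ℤ) - ((ftM ψ i).m k i : ℤ)) =
        ((ψ.m k (i - 1) : ℤ) - (ψ.m k i : ℤ)) + (if k = ellF ψ i then (-1 : ℤ) else 0)
          + (if k + 1 = ellF ψ i then (-1 : ℤ) else 0) := by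
    intro k hk
    have e1 : (ftM ψ i).m k (i - 1) =
        if k + 1 = ellF ψ i then ψ.m k (i - 1) - 1 else ψ.m k (i - 1) := by
      simp only [ftM]
      rw [if_neg (fun hc => hne hc.2.2)]
      by_cases hc : k + 1 = ellF ψ i
      · rw [if_pos ⟨hc, hk, trivial⟩, if_pos hc]
      · rw [if_neg (fun hh => hc hh.1), if_neg hc]
    have e2 : (ftM ψ i).m k i =
        if k = ellF ψ i then ψ.m k i + 1 else ψ.m k i := by
      simp only [ftM]
      by_cases hc : k = ellF ψ i
      · rw [if_pos ⟨hc, hk, trivial⟩, if_pos hc]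
      · rw [if_neg (fun hh => hc hh.1), if_neg (fun hh => hne' hh.2.2), if_neg hc]
    rw [e1, e2]
    by_cases h2 : k + 1 = ellF ψ i
    · have h1 : k ≠ ellF ψ i := by omega
      have hm1 : 1 ≤ ψ.m k (i - 1) := by
        rw [show k = ellF ψ i - 1 by omega]; exact key (by omega)
      rw [if_pos h2, if_neg h1, if_pos h2, if_neg h1]
      push_cast [hm1]
      ring
    · rw [if_neg h2, if_neg h2]
      by_cases h1 : k = ellF ψ i
      · rw [if_pos h1, if_pos h1]; push_cast; ring
      · rw [if_neg h1, if_neg h1]; ring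
  have hshift := Sval_shift (ψ := ψ) (ψ' := ftM ψ i) (i := i) hF1 (-1) hd
  have hSl : Sval (ftM ψ i) i (ellF ψ i) = minS ψ i - 1 := by
    rw [hshift _ hF1, hF2, if_pos (le_refl _), if_neg (by omega)]; ring
  have hge : ∀ len, 1 ≤ len → minS ψ i - 1 ≤ Sval (ftM ψ i) i len := by
    intro len hl
    rw [hshift len hl]
    rcases lt_trichotomy len (ellF ψ i) with h | h | h
    · have h1 := ellF_lt ψ i hl h
      rw [if_pos (by omega), if_pos (by omega)]; omega
    · rw [h, hF2, if_pos (le_refl _), if_neg (by omega)]; omega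
    · have h1 := minS_le ψ i hl
      rw [if_neg (by omega), if_neg (by omega)]; omega
  have hmin' : minS (ftM ψ i) i = minS ψ i - 1 := by
    apply le_antisymm
    · rw [← hSl]; exact minS_le (ftM ψ i) i hF1
    · obtain ⟨l, hl1, hl2⟩ := minS_mem (ftM ψ i) i
      rw [← hl2]; exact hge l hl1
  have hm0 : minS (ftM ψ i) i ≠ 0 := by have := minS_nonpos ψ i; omega
  have hellE : ellE (ftM ψ i) i = ellF ψ i := by
    apply le_antisymm
    · rw [ellE]
      apply csSup_le ((minS_mem (ftM ψ i) i).imp fun l hl => hl)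
      intro l hl
      by_contra hc
      push_neg at hc
      have h1 := hl.2
      rw [hshift l hl.1, if_neg (by omega), if_neg (by omega), hmin'] at h1
      have h2 := minS_le ψ i hl.1
      omega
    · exact le_csSup (ellE_bdd (ftM ψ i) i hm0) ⟨hF1, hSl.trans hmin'.symm⟩
  rw [etM, if_neg hm0]
  congr 1
  apply ext'
  funext len j
  show (if len = ellE (ftM ψ i) i ∧ 1 ≤ len ∧ j = i then (ftM ψ i).m len j - 1
    else if len + 1 = ellE (ftM ψ i) i ∧ 1 ≤ len ∧ j = i - 1 then (ftM ψ i).m len j + 1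
    else (ftM ψ i).m len j) = ψ.m len j
  rw [hellE]
  by_cases hA : len = ellF ψ i ∧ 1 ≤ len ∧ j = i
  · rw [if_pos hA]
    have : (ftM ψ i).m len j = ψ.m len j + 1 := by
      simp only [ftM]; rw [if_pos hA]
    omega
  · rw [if_neg hA]
    by_cases hB : len + 1 = ellF ψ i ∧ 1 ≤ len ∧ j = i - 1
    · rw [if_pos hB]
      have hm1 : 1 ≤ ψ.m len j := by
        rw [show len = ellF ψ i - 1 by omega, hB.2.2]; exact key (by omega)
      have : (ftM ψ i).m len j = ψ.m len j - 1 := by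
        simp only [ftM]; rw [if_neg (by rintro ⟨h1, -⟩; omega), if_pos hB]
      omega
    · rw [if_neg hB]
      simp only [ftM]
      rw [if_neg hA, if_neg hB]

theorem dir2 (he : 2 ≤ e) (ψ : Multisegment e) (i : ZMod e)
    (φ : Multisegment e) (hφ : etM ψ i = some φ) : ftM φ i = ψ := by
  have hne : i - 1 ≠ i := sub_one_ne he i
  have hne' : i ≠ i - 1 := fun hc => hne hc.symm
  rw [etM] at hφ
  by_cases hm0 : minS ψ i = 0
  · rw [if_pos hm0] at hφ; exact absurd hφ (by simp)
  rw [if_neg hm0] at hφ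
  obtain rfl := Option.some.inj hφ
  have hE1 := (ellE_mem ψ i hm0).1
  have hE2 := (ellE_mem ψ i hm0).2
  have hmneg : minS ψ i < 0 := lt_of_le_of_ne (minS_nonpos ψ i) hm0
  -- key positivity fact
  have key : 1 ≤ ψ.m (ellE ψ i) i := by
    have h1 := ellE_gt ψ i hm0 (l := ellE ψ i + 1) (by omega)
    have h2 := Sval_succ ψ i (ellE ψ i)
    rw [hE2] at h2
    omega
  set φ' : Multisegment e :=
    { m := fun len j =>
        if len = ellE ψ i ∧ 1 ≤ len ∧ j = i then ψ.m len j - 1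
        else if len + 1 = ellE ψ i ∧ 1 ≤ len ∧ j = i - 1 then ψ.m len j + 1
        else ψ.m len j
      zero := _
      finite := _ } with hφ'def
  have hd : ∀ k : ℕ, 1 ≤ k →
      ((φ'.m k (i - 1) : ℤ) - (φ'.m k i : ℤ)) =
        ((ψ.m k (i - 1) : ℤ) - (ψ.m k i : ℤ)) + (if k = ellE ψ i then (1 : ℤ) else 0)
          + (if k + 1 = ellE ψ i then (1 : ℤ) else 0) := by
    intro k hk
    have e1 : φ'.m k (i - 1) =
        if k + 1 = ellE ψ i then ψ.m k (i - 1) + 1 else ψ.m k (i - 1) := by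
      simp only [hφ'def]
      rw [if_neg (fun hc => hne hc.2.2)]
      by_cases hc : k + 1 = ellE ψ i
      · rw [if_pos ⟨hc, hk, trivial⟩, if_pos hc]
      · rw [if_neg (fun hh => hc hh.1), if_neg hc]
    have e2 : φ'.m k i =
        if k = ellE ψ i then ψ.m k i - 1 else ψ.m k i := by
      simp only [hφ'def]
      by_cases hc : k = ellE ψ i
      · rw [if_pos ⟨hc, hk, trivial⟩, if_pos hc]
      · rw [if_neg (fun hh => hc hh.1), if_neg (fun hh => hne' hh.2.2), if_neg hc]
    rw [e1, e2]
    by_cases h1 : k = ellE ψ i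
    · have h2 : k + 1 ≠ ellE ψ i := by omega
      have hm1 : 1 ≤ ψ.m k i := h1 ▸ key
      rw [if_neg h2, if_pos h1, if_pos h1, if_neg h2]
      push_cast [hm1]
      ring
    · rw [if_neg h1, if_neg h1]
      by_cases h2 : k + 1 = ellE ψ i
      · rw [if_pos h2, if_pos h2]; push_cast; ring
      · rw [if_neg h2, if_neg h2]; ring
  have hshift := Sval_shift (ψ := ψ) (ψ' := φ') (i := i) hE1 1 hd
  have hSl : Sval φ' i (ellE ψ i) = minS ψ i + 1 := by
    rw [hshift _ hE1, hE2, if_pos (le_refl _), if_neg (by omega)]; ring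
  have hge : ∀ len, 1 ≤ len → minS ψ i + 1 ≤ Sval φ' i len := by
    intro len hl
    rw [hshift len hl]
    rcases lt_trichotomy len (ellE ψ i) with h | h | h
    · have h1 := minS_le ψ i hl
      rw [if_pos (by omega), if_pos (by omega)]; omega
    · rw [h, hE2, if_pos (le_refl _), if_neg (by omega)]; omega
    · have h1 := ellE_gt ψ i hm0 h
      rw [if_neg (by omega), if_neg (by omega)]; omega
  have hmin' : minS φ' i = minS ψ i + 1 := by
    apply le_antisymm
    · rw [← hSl]; exact minS_le φ' i hE1
    · obtain ⟨l, hl1, hl2⟩ := minS_mem φ' i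
      rw [← hl2]; exact hge l hl1
  have hellF : ellF φ' i = ellE ψ i := by
    apply le_antisymm
    · rw [ellF]
      exact Nat.sInf_le ⟨hE1, hSl.trans hmin'.symm⟩
    · by_contra hc
      push_neg at hc
      have h1 := (ellF_mem φ' i).1
      have h2 := (ellF_mem φ' i).2
      rw [hshift _ h1, if_pos (by omega), if_pos (by omega), hmin'] at h2
      have h3 := minS_le ψ i h1
      omega
  apply ext'
  funext len j
  show (if len = ellF φ' i ∧ 1 ≤ len ∧ j = i then φ'.m len j + 1
    else if len + 1 = ellF φ' i ∧ 1 ≤ len ∧ j = i - 1 then φ'.m len j - 1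
    else φ'.m len j) = ψ.m len j
  rw [hellF]
  by_cases hA : len = ellE ψ i ∧ 1 ≤ len ∧ j = i
  · rw [if_pos hA]
    have hm1 : 1 ≤ ψ.m len j := by rw [hA.1, hA.2.2]; exact key
    have : φ'.m len j = ψ.m len j - 1 := by
      simp only [hφ'def]; rw [if_pos hA]
    omega
  · rw [if_neg hA]
    by_cases hB : len + 1 = ellE ψ i ∧ 1 ≤ len ∧ j = i - 1
    · rw [if_pos hB]
      have : φ'.m len j = ψ.m len j + 1 := by
        simp only [hφ'def]; rw [if_neg (by rintro ⟨h1, -⟩; omega), if_pos hB]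
      omega
    · rw [if_neg hB]
      simp only [hφ'def]
      rw [if_neg hA, if_neg hB]

end Multisegment

open Multisegment in
/-- Statement 15: on aperiodic multisegments, `ẽ_i ∘ f̃_i = id`, and `f̃_i ∘ ẽ_i = id`
whenever `ẽ_i ψ ≠ 0`. -/
theorem etilde_ftilde_inverse (e : ℕ) (he : 2 ≤ e)
    (ψ : Multisegment e) (hψ : Aperiodic ψ) (i : ZMod e) :
    etM (ftM ψ i) i = some ψ ∧ ∀ φ : Multisegment e, etM ψ i = some φ → ftM φ i = ψ :=
  ⟨dir1 he ψ i, fun φ h => dir2 he ψ i φ h⟩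
end
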